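/- Let N ≥ 3 be odd, m = (N−1)/2, β ≠ 0 a real number, and ω_k = √(1 + 4 sin²(kπ/N)) for 1 ≤ k ≤ m, ω_N = 1. Define the quadratic polynomial h on ℝ^{2m+1} in the variables (α_1, …, α_m, μ_1, …, μ_m, γ) by h = (β/(2N)) [ (3/4) Σ_{k=1}^m (3α_k² − μ_k²)/ω_k² + (3/2) γ²/ω_N² + 6 (γ/ω_N) Σ_{k=1}^m α_k/ω_k + 6 Σ_{1≤k<l≤m} α_k α_l/(ω_k ω_l) ]. Then the (2m+1)×(2m+1) Hessian matrix of h (a constant matrix) is invertible. In particular the truncated normal form of the periodic KG lattice with N odd satisfies the Kolmogorov nondegeneracy condition in the action variables (a_1, …, a_m, b_1, …, b_m, a_N). -/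

import Mathlib

/-!
Write `c = β / (2N)` and `a_k = α_k / ω_k`. Since `ω_N = 1` and
`6 Σ_{k<l} a_k a_l = 3 ((Σ a_k)² - Σ a_k²)`, the polynomial `h` is the quadratic form `½ vᵀ H v`
of `H = c (D + 6 w wᵀ)`, where `w = (1/ω_k, 0, 1)` and `D` is diagonal with entries
`-3/(2ω_k²)`, `-3/(2ω_k²)`, `-3`. So the Hessian of `h` is the symmetric matrix `H`, and by the
matrix determinant lemma `det H = c^(2m+1) (∏ D_i) (1 + 6 wᵀ D⁻¹ w)`, where
`1 + 6 wᵀ D⁻¹ w = 1 - 4m - 2 ≠ 0`.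
-/

noncomputable section

open Finset

/-- Index `j` (0-based) as an element of `Fin (2m+1)`. -/
def vidx (m j : ℕ) : Fin (2 * m + 1) := ⟨j % (2 * m + 1), Nat.mod_lt _ (Nat.succ_pos _)⟩

/-- The normal-mode frequencies `ω_k = √(1 + 4 sin²(kπ/N))` (note `ω_N = 1`). -/
def omg (N k : ℕ) : ℝ := Real.sqrt (1 + 4 * Real.sin (k * Real.pi / N) ^ 2)

/-- The quadratic polynomial `h` on `ℝ^{2m+1}` in the variables
`(α_1, …, α_m, μ_1, …, μ_m, γ)` (stored as `v = (α, μ, γ)` with `α_k = v_{k−1}`,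
`μ_k = v_{m+k−1}`, `γ = v_{2m}` in 0-based components):
`h = (β/(2N)) [ (3/4) Σ_k (3α_k² − μ_k²)/ω_k² + (3/2) γ²/ω_N²
+ 6 (γ/ω_N) Σ_k α_k/ω_k + 6 Σ_{k<l} α_k α_l/(ω_k ω_l) ]`. -/
def hquad (m N : ℕ) (β : ℝ) (v : Fin (2 * m + 1) → ℝ) : ℝ :=
  β / (2 * N) *
    ((3 / 4) * ∑ k ∈ Finset.Icc 1 m,
        (3 * v (vidx m (k - 1)) ^ 2 - v (vidx m (m + k - 1)) ^ 2) / omg N k ^ 2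
      + (3 / 2) * v (vidx m (2 * m)) ^ 2 / omg N N ^ 2
      + 6 * (v (vidx m (2 * m)) / omg N N) * ∑ k ∈ Finset.Icc 1 m, v (vidx m (k - 1)) / omg N k
      + 6 * ∑ k ∈ Finset.Icc 1 m, ∑ l ∈ Finset.Icc (k + 1) m,
          v (vidx m (k - 1)) * v (vidx m (l - 1)) / (omg N k * omg N l))

open Matrix

section Hessian

variable {𝕜 E F : Type*} [NontriviallyNormedField 𝕜] [NormedAddCommGroup E] [NormedSpace 𝕜 E]
  [NormedAddCommGroup F] [NormedSpace 𝕜 F]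

lemma fderiv_bilinear_diag_apply (B : E →L[𝕜] E →L[𝕜] F) (x h : E) :
    fderiv 𝕜 (fun v => B v v) x h = B x h + B h x := by
  have hB := B.hasFDerivAt_of_bilinear (hasFDerivAt_id x) (hasFDerivAt_id x)
  dsimp only [id] at hB
  rw [hB.fderiv]
  simp

lemma fderiv_fderiv_bilinear_diag_apply (B : E →L[𝕜] E →L[𝕜] F) (x h k : E) :
    fderiv 𝕜 (fun v => fderiv 𝕜 (fun v => B v v) v k) x h = B h k + B k h := by
  have hlin : (fun v => fderiv 𝕜 (fun v => B v v) v k) = ⇑(B.flip k + B k) := by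
    ext v
    simp [fderiv_bilinear_diag_apply]
  rw [hlin, ContinuousLinearMap.fderiv]
  simp [add_comm]

end Hessian

lemma hessian_toBilin'_diag {𝕜 n : Type*} [NontriviallyNormedField 𝕜] [CompleteSpace 𝕜]
    [Fintype n] [DecidableEq n] (M : Matrix n n 𝕜) (x : n → 𝕜) :
    (Matrix.of fun i j => fderiv 𝕜 (fun v => fderiv 𝕜 (fun v => Matrix.toBilin' M v v) v
      (Pi.single j 1)) x (Pi.single i 1)) = M + Mᵀ := by
  ext i j
  exact (fderiv_fderiv_bilinear_diag_apply (Matrix.toBilin' M).toContinuousBilinearMap x _ _).trans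
    (by simp [Matrix.toBilin'_single])

lemma dotProduct_diagonal_add_vecMulVec_mulVec {R n : Type*} [CommSemiring R] [Fintype n]
    [DecidableEq n] (d u w v : n → R) :
    v ⬝ᵥ ((diagonal d + vecMulVec u w) *ᵥ v) = ∑ i, d i * v i ^ 2 + (u ⬝ᵥ v) * (w ⬝ᵥ v) := by
  rw [add_mulVec, dotProduct_add, vecMulVec_mulVec]
  simp [dotProduct, mulVec_diagonal, sq, mul_left_comm, Finset.sum_mul, mul_assoc]

lemma det_diagonal_add_vecMulVec {K n : Type*} [Field K] [Fintype n] [DecidableEq n]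
    {d : n → K} (hd : ∀ i, d i ≠ 0) (u w : n → K) :
    (diagonal d + vecMulVec u w).det = (∏ i, d i) * (1 + ∑ i, w i * u i / d i) := by
  have hD : IsUnit (diagonal d).det := by
    simpa [det_diagonal, isUnit_iff_ne_zero, Finset.prod_ne_zero_iff] using hd
  have hinv : (diagonal d)⁻¹ = diagonal fun i => (d i)⁻¹ :=
    inv_eq_left_inv (by simp [diagonal_mul_diagonal, hd])
  rw [vecMulVec_eq Unit, det_add_replicateCol_mul_replicateRow hD, det_diagonal, det_unique, hinv]
  simp [Matrix.mul_apply, replicateRow, replicateCol, diagonal, div_eq_mul_inv, mul_right_comm]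

lemma sq_sum_Icc_one {R : Type*} [CommSemiring R] (f : ℕ → R) (n : ℕ) :
    (∑ k ∈ Icc 1 n, f k) ^ 2 =
      ∑ k ∈ Icc 1 n, f k ^ 2 + 2 * ∑ k ∈ Icc 1 n, ∑ l ∈ Icc (k + 1) n, f k * f l := by
  induction n with
  | zero => simp
  | succ n ih =>
    have hpairs : ∑ k ∈ Icc 1 (n + 1), ∑ l ∈ Icc (k + 1) (n + 1), f k * f l
        = ∑ k ∈ Icc 1 n, ∑ l ∈ Icc (k + 1) n, f k * f l + (∑ k ∈ Icc 1 n, f k) * f (n + 1) := by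
      rw [sum_Icc_succ_top (by omega), Icc_eq_empty_of_lt (n + 1).lt_succ_self, sum_empty,
        add_zero, sum_mul, ← sum_add_distrib]
      refine sum_congr rfl fun k hk => ?_
      rw [sum_Icc_succ_top (by linarith [(mem_Icc.mp hk).2])]
    rw [sum_Icc_succ_top (by omega), sum_Icc_succ_top (by omega), hpairs, add_sq, ih]
    ring

lemma omg_pos (N k : ℕ) : 0 < omg N k := Real.sqrt_pos.mpr (by positivity)

lemma omg_self (N : ℕ) : omg N N = 1 := by
  rcases eq_or_ne N 0 with rfl | hN
  · simp [omg]
  · simp [omg, mul_div_cancel_left₀ Real.pi (Nat.cast_ne_zero.mpr hN : (N : ℝ) ≠ 0)]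

lemma vidx_val {m j : ℕ} (h : j < 2 * m + 1) : (vidx m j : ℕ) = j :=
  Nat.mod_eq_of_lt h

lemma sum_univ_eq_sum_vidx_blocks {M : Type*} [AddCommMonoid M] (m : ℕ) (g : Fin (2 * m + 1) → M) :
    ∑ i, g i = ∑ k ∈ Icc 1 m, g (vidx m (k - 1)) + ∑ k ∈ Icc 1 m, g (vidx m (m + k - 1))
      + g (vidx m (2 * m)) := by
  have hIcc (F : ℕ → M) : ∑ k ∈ Icc 1 m, F k = ∑ j ∈ range m, F (j + 1) :=
    sum_nbij' (· - 1) (· + 1) (by simp; omega) (by simp) (by simp; omega) (by simp)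
      (by simp; intro k hk _; rw [Nat.sub_add_cancel hk])
  have hvidx (i : Fin (2 * m + 1)) : vidx m i = i := Fin.ext (vidx_val i.isLt)
  calc ∑ i, g i = ∑ i : Fin (2 * m + 1), g (vidx m i) := by simp only [hvidx]
    _ = ∑ j ∈ range (2 * m + 1), g (vidx m j) := Fin.sum_univ_eq_sum_range (g ∘ vidx m) _
    _ = _ := by rw [sum_range_succ, two_mul, sum_range_add, hIcc, hIcc]; simp

def kgWeight (m N : ℕ) (i : Fin (2 * m + 1)) : ℝ :=
  if (i : ℕ) < m then (omg N (i + 1))⁻¹ else if (i : ℕ) = 2 * m then 1 else 0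

def kgDiag (m N : ℕ) (i : Fin (2 * m + 1)) : ℝ :=
  if (i : ℕ) < m then -(3 / 2) / omg N (i + 1) ^ 2
  else if (i : ℕ) = 2 * m then -3 else -(3 / 2) / omg N (i - m + 1) ^ 2

def kgHessian (m N : ℕ) (β : ℝ) : Matrix (Fin (2 * m + 1)) (Fin (2 * m + 1)) ℝ :=
  (β / (2 * N)) • (diagonal (kgDiag m N) + (6 : ℝ) • vecMulVec (kgWeight m N) (kgWeight m N))

lemma sum_kgWeight_kgDiag (m N : ℕ) (F : ℝ → ℝ → Fin (2 * m + 1) → ℝ) :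
    ∑ i, F (kgWeight m N i) (kgDiag m N i) i =
      ∑ k ∈ Icc 1 m, F (omg N k)⁻¹ (-(3 / 2) / omg N k ^ 2) (vidx m (k - 1))
      + ∑ k ∈ Icc 1 m, F 0 (-(3 / 2) / omg N k ^ 2) (vidx m (m + k - 1))
      + F 1 (-3) (vidx m (2 * m)) := by
  rw [sum_univ_eq_sum_vidx_blocks]
  congr 1
  congr 1
  · refine sum_congr rfl fun k hk => ?_
    obtain ⟨hk1, hkm⟩ := mem_Icc.mp hk
    simp only [kgWeight, kgDiag, vidx_val (show k - 1 < 2 * m + 1 by omega),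
      if_pos (show k - 1 < m by omega), Nat.sub_add_cancel hk1]
  · refine sum_congr rfl fun k hk => ?_
    obtain ⟨hk1, hkm⟩ := mem_Icc.mp hk
    simp only [kgWeight, kgDiag, vidx_val (show m + k - 1 < 2 * m + 1 by omega),
      if_neg (show ¬ m + k - 1 < m by omega), if_neg (show m + k - 1 ≠ 2 * m by omega),
      show m + k - 1 - m + 1 = k by omega]
  · simp only [kgWeight, kgDiag, vidx_val (show 2 * m < 2 * m + 1 by omega),
      if_neg (show ¬ 2 * m < m by omega), if_true]

lemma kgHessian_isSymm (m N : ℕ) (β : ℝ) : (kgHessian m N β).IsSymm :=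
  ((isSymm_diagonal _).add ((show (vecMulVec (kgWeight m N) (kgWeight m N)).IsSymm from
    transpose_vecMulVec _ _).smul _)).smul _

lemma toBilin'_half_kgHessian (m N : ℕ) (β : ℝ) (v : Fin (2 * m + 1) → ℝ) :
    Matrix.toBilin' ((2 : ℝ)⁻¹ • kgHessian m N β) v v = β / (2 * N) / 2 *
      (∑ i, kgDiag m N i * v i ^ 2 + 6 * (∑ i, kgWeight m N i * v i) ^ 2) := by
  rw [Matrix.toBilin'_apply', kgHessian, smul_smul, smul_mulVec, dotProduct_smul,
    ← smul_vecMulVec, dotProduct_diagonal_add_vecMulVec_mulVec]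
  simp only [dotProduct, Pi.smul_apply, smul_eq_mul, mul_assoc, ← mul_sum]
  ring

lemma hquad_eq_toBilin' (m N : ℕ) (β : ℝ) (v : Fin (2 * m + 1) → ℝ) :
    hquad m N β v = Matrix.toBilin' ((2 : ℝ)⁻¹ • kgHessian m N β) v v := by
  rw [toBilin'_half_kgHessian, sum_kgWeight_kgDiag m N fun _ d i => d * v i ^ 2,
    sum_kgWeight_kgDiag m N fun w _ i => w * v i, hquad, omg_self]
  simp only [zero_mul, sum_const_zero, add_zero, one_mul, one_pow, div_one]
  have hdiff : ∑ k ∈ Icc 1 m, (3 * v (vidx m (k - 1)) ^ 2 - v (vidx m (m + k - 1)) ^ 2) /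
      omg N k ^ 2 = 3 * ∑ k ∈ Icc 1 m, (v (vidx m (k - 1)) / omg N k) ^ 2
        - ∑ k ∈ Icc 1 m, (v (vidx m (m + k - 1)) / omg N k) ^ 2 := by
    rw [mul_sum, ← sum_sub_distrib]
    exact sum_congr rfl fun k _ => by ring
  have hα : ∑ k ∈ Icc 1 m, -(3 / 2) / omg N k ^ 2 * v (vidx m (k - 1)) ^ 2 =
      -(3 / 2) * ∑ k ∈ Icc 1 m, (v (vidx m (k - 1)) / omg N k) ^ 2 := by
    rw [mul_sum]
    exact sum_congr rfl fun k _ => by ring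
  have hμ : ∑ k ∈ Icc 1 m, -(3 / 2) / omg N k ^ 2 * v (vidx m (m + k - 1)) ^ 2 =
      -(3 / 2) * ∑ k ∈ Icc 1 m, (v (vidx m (m + k - 1)) / omg N k) ^ 2 := by
    rw [mul_sum]
    exact sum_congr rfl fun k _ => by ring
  have hlin : ∑ k ∈ Icc 1 m, (omg N k)⁻¹ * v (vidx m (k - 1)) =
      ∑ k ∈ Icc 1 m, v (vidx m (k - 1)) / omg N k :=
    sum_congr rfl fun k _ => by ring
  have hpairs : ∑ k ∈ Icc 1 m, ∑ l ∈ Icc (k + 1) m,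
      v (vidx m (k - 1)) * v (vidx m (l - 1)) / (omg N k * omg N l) =
      ∑ k ∈ Icc 1 m, ∑ l ∈ Icc (k + 1) m,
        v (vidx m (k - 1)) / omg N k * (v (vidx m (l - 1)) / omg N l) :=
    sum_congr rfl fun k _ => sum_congr rfl fun l _ => by ring
  rw [hdiff, hα, hμ, hlin, hpairs]
  linear_combination (-3 * β / (2 * N)) * sq_sum_Icc_one (fun k => v (vidx m (k - 1)) / omg N k) m

lemma isUnit_kgHessian {m N : ℕ} (hN : N ≠ 0) {β : ℝ} (hβ : β ≠ 0) :
    IsUnit (kgHessian m N β) := by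
  have hdiag (i : Fin (2 * m + 1)) : kgDiag m N i ≠ 0 := by
    unfold kgDiag
    split_ifs <;> simp [(omg_pos _ _).ne']
  have hrank : 1 + ∑ i, kgWeight m N i * ((6 : ℝ) • kgWeight m N) i / kgDiag m N i
      = -(4 * m + 1) := by
    simp only [Pi.smul_apply, smul_eq_mul]
    rw [sum_kgWeight_kgDiag m N fun w d _ => w * (6 * w) / d,
      sum_congr rfl fun k _ => show (omg N k)⁻¹ * (6 * (omg N k)⁻¹) / (-(3 / 2) / omg N k ^ 2)
        = -4 by field_simp [(omg_pos N k).ne']; ring]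
    simp only [sum_neg_distrib, sum_const, Nat.card_Icc, add_tsub_cancel_right, nsmul_eq_mul,
      mul_zero, zero_div, add_zero, mul_one]
    ring
  have hc : β / (2 * N) ≠ 0 := by positivity
  rw [isUnit_iff_isUnit_det, kgHessian, det_smul, ← smul_vecMulVec,
    det_diagonal_add_vecMulVec hdiag, hrank, isUnit_iff_ne_zero]
  exact mul_ne_zero (pow_ne_zero _ hc) (mul_ne_zero (prod_ne_zero_iff.mpr fun i _ => hdiag i)
    (neg_ne_zero.mpr (by positivity)))

theorem KG_odd_normal_form_KAM_nondegenerate_general (N : ℕ) (hN : 3 ≤ N)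
    (m : ℕ) (β : ℝ) (hβ : β ≠ 0) :
    IsUnit (Matrix.of fun i j : Fin (2 * m + 1) =>
      fderiv ℝ (fun v => fderiv ℝ (hquad m N β) v (Pi.single j (1 : ℝ))) 0
        (Pi.single i (1 : ℝ))) := by
  have hquad_eq : hquad m N β = fun v => Matrix.toBilin' ((2 : ℝ)⁻¹ • kgHessian m N β) v v :=
    funext (hquad_eq_toBilin' m N β)
  rw [hquad_eq, hessian_toBilin'_diag, transpose_smul, (kgHessian_isSymm m N β).eq, ← add_smul,
    show (2 : ℝ)⁻¹ + 2⁻¹ = 1 by norm_num, one_smul]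
  exact isUnit_kgHessian (by omega) hβ

/-- Let `N ≥ 3` be odd, `m = (N−1)/2`, `β ≠ 0`, and let `h` be the
fourth-order normal form of the periodic KG lattice written as a quadratic polynomial
of the action variables on `ℝ^{2m+1}`.  Then the `(2m+1)×(2m+1)` Hessian matrix of `h`
(a constant matrix) is invertible, i.e. the normal form satisfies the Kolmogorov
nondegeneracy condition. -/
theorem KG_odd_normal_form_KAM_nondegenerate (N : ℕ) (hN : 3 ≤ N) (hodd : Odd N)
    (m : ℕ) (hm : m = (N - 1) / 2) (β : ℝ) (hβ : β ≠ 0) :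
    IsUnit (Matrix.of fun i j : Fin (2 * m + 1) =>
      fderiv ℝ (fun v => fderiv ℝ (hquad m N β) v (Pi.single j (1 : ℝ))) 0
        (Pi.single i (1 : ℝ))) :=
  KG_odd_normal_form_KAM_nondegenerate_general N hN m β hβ

end
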